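/- For α > 0, the scalar curvature function R_α tends to 8/(π²α²) as r → ∞, and consequently inf_{r > 0} R_α(r) = 8/(π²α²). -/

import Mathlib

open Real

/-- Warping function `φ_α(r) = α · arctan(r/α)`. -/
noncomputable def warp (α : ℝ) : ℝ → ℝ := fun r => α * arctan (r / α)

/-- Scalar curvature of the rotationally symmetric metric `dr² + φ_α(r)² g_{S²}`:
`R_α(r) = 2(−2φ_α''(r)/φ_α(r) + (1 − φ_α'(r)²)/φ_α(r)²)`. -/
noncomputable def scalarCurv (α : ℝ) : ℝ → ℝ := fun r =>
  2 * (-2 * deriv (deriv (warp α)) r / warp α r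
        + (1 - (deriv (warp α) r) ^ 2) / (warp α r) ^ 2)

/-!
Substitute the angle `u = arctan (r / α) ∈ (0, π/2)`: then `φ_α = α u`, `φ_α' = cos² u` and
`φ_α'' = -(2/α) sin u cos³ u`, so `R_α = (2/α²) (4 sin u cos³ u / u + (1 - cos⁴ u) / u²)`.
As `r → ∞` we have `u → π/2`, where this expression is continuous with value `4/π²`. For the lower
bound, the first summand is nonnegative and `1 - cos⁴ u ≥ sin² u ≥ (2u/π)²` by Jordan's inequality.
-/

open Filter Topology

noncomputable def angularCurv (u : ℝ) : ℝ :=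
  4 * sin u * cos u ^ 3 / u + (1 - cos u ^ 4) / u ^ 2

lemma tendsto_angularCurv_pi_div_two :
    Tendsto angularCurv (𝓝 (π / 2)) (𝓝 (4 / π ^ 2)) := by
  have hne : π / 2 ≠ 0 := by positivity
  have hcont : ContinuousAt angularCurv (π / 2) :=
    ((by fun_prop : Continuous fun u => 4 * sin u * cos u ^ 3).continuousAt.div
        continuousAt_id hne).add
      ((by fun_prop : Continuous fun u => 1 - cos u ^ 4).continuousAt.div
        (continuousAt_id.pow 2) (pow_ne_zero 2 hne))
  convert hcont.tendsto using 2
  simp [angularCurv]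
  ring

lemma four_div_pi_sq_le_angularCurv {u : ℝ} (hu₀ : 0 < u) (hu : u ≤ π / 2) :
    4 / π ^ 2 ≤ angularCurv u := by
  have hsin : 0 ≤ sin u := sin_nonneg_of_nonneg_of_le_pi hu₀.le (by linarith [pi_pos])
  have hcos : 0 ≤ cos u := cos_nonneg_of_neg_pi_div_two_le_of_le (by linarith [pi_pos]) hu
  have hjordan : (2 / π * u) ^ 2 ≤ sin u ^ 2 :=
    pow_le_pow_left₀ (by positivity) (mul_le_sin hu₀.le hu) 2
  have hcos4 : sin u ^ 2 ≤ 1 - cos u ^ 4 := by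
    nlinarith [sin_sq_add_cos_sq u, sq_nonneg (cos u), cos_sq_le_one u]
  calc 4 / π ^ 2 = (2 / π * u) ^ 2 / u ^ 2 := by field_simp; norm_num
    _ ≤ (1 - cos u ^ 4) / u ^ 2 := by gcongr; exact hjordan.trans hcos4
    _ ≤ angularCurv u := by unfold angularCurv; simp only [le_add_iff_nonneg_left]; positivity

section Warp

variable {α : ℝ}

lemma hasDerivAt_warp (hα : α ≠ 0) (r : ℝ) :
    HasDerivAt (warp α) (cos (arctan (r / α)) ^ 2) r := by
  have h := ((hasDerivAt_id' r).div_const α).arctan.const_mul α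
  refine h.congr_deriv ?_
  rw [cos_sq_arctan]
  field_simp

lemma deriv_warp (hα : α ≠ 0) : deriv (warp α) = fun r => cos (arctan (r / α)) ^ 2 :=
  funext fun r => (hasDerivAt_warp hα r).deriv

lemma deriv_deriv_warp (hα : α ≠ 0) (r : ℝ) :
    deriv (deriv (warp α)) r =
      -(2 / α) * sin (arctan (r / α)) * cos (arctan (r / α)) ^ 3 := by
  have h := ((hasDerivAt_id' r).div_const α).arctan.cos.fun_pow 2
  rw [deriv_warp hα, h.deriv, ← cos_sq_arctan]
  ring

lemma scalarCurv_eq_angularCurv (hα : α ≠ 0) (r : ℝ) :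
    scalarCurv α r = 2 / α ^ 2 * angularCurv (arctan (r / α)) := by
  simp only [scalarCurv]
  rw [deriv_deriv_warp hα, deriv_warp hα]
  simp only [warp, angularCurv]
  ring

lemma tendsto_scalarCurv_atTop (hα : 0 < α) :
    Tendsto (scalarCurv α) atTop (𝓝 (8 / (π ^ 2 * α ^ 2))) := by
  have hangle : Tendsto (fun r => arctan (r / α)) atTop (𝓝 (π / 2)) :=
    (tendsto_arctan_atTop.mono_right nhdsWithin_le_nhds).comp (tendsto_id.atTop_div_const hα)
  have h := (tendsto_angularCurv_pi_div_two.comp hangle).const_mul (2 / α ^ 2)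
  rw [show 2 / α ^ 2 * (4 / π ^ 2) = 8 / (π ^ 2 * α ^ 2) by ring] at h
  exact h.congr fun r => (scalarCurv_eq_angularCurv hα.ne' r).symm

lemma eight_div_le_scalarCurv {r : ℝ} (hα : 0 < α) (hr : 0 < r) :
    8 / (π ^ 2 * α ^ 2) ≤ scalarCurv α r := by
  rw [scalarCurv_eq_angularCurv hα.ne', show 8 / (π ^ 2 * α ^ 2) = 2 / α ^ 2 * (4 / π ^ 2) by ring]
  gcongr
  exact four_div_pi_sq_le_angularCurv (arctan_pos.2 (div_pos hr hα)) (arctan_lt_pi_div_two _).le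

end Warp

open Filter Topology in
/-- `R_α(r) → 8/(π²α²)` as `r → ∞`, and `inf_{r>0} R_α(r) = 8/(π²α²)`. -/
theorem stmt_5 (α : ℝ) (hα : 0 < α) :
    Filter.Tendsto (scalarCurv α) Filter.atTop (nhds (8 / (π ^ 2 * α ^ 2))) ∧
    IsGLB (scalarCurv α '' Set.Ioi 0) (8 / (π ^ 2 * α ^ 2)) := by
  have hlim := tendsto_scalarCurv_atTop hα
  refine ⟨hlim, isGLB_of_mem_closure ?_ ?_⟩
  · rintro _ ⟨r, hr, rfl⟩
    exact eight_div_le_scalarCurv hα hr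
  · exact mem_closure_of_tendsto hlim
      ((eventually_gt_atTop 0).mono fun r hr => Set.mem_image_of_mem _ hr)
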